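/- arXiv:2401.14834 — 2 statements merged into one kernel-verified Lean document; each statement's English description precedes it below -/
import Mathlib

section
/- Let 𝓛 be a summable category, i.e. a category with zero morphisms equipped with a summability structure (S, π₀, π₁, σ). Let ι₀ = ⟨id_X, 0⟩ ∈ 𝓛(X, S X) and let τ_X ∈ 𝓛(S²X, S X) be the natural morphism with π₀∘τ = π₀∘π₀ and π₁∘τ = π₀∘π₁ + π₁∘π₀. Then the triple (S, ι₀, τ) is a monad on 𝓛: ι₀ and τ are natural, τ∘ι₀_{S X} = id_{S X} = τ∘S(ι₀), and τ∘S(τ_X) = τ∘τ_{S X}. -/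
open CategoryTheory Limits

universe v u

/-- A pre-summability structure on a category with zero morphisms: a functor `S`
together with jointly monic natural transformations `π₀, π₁ : S ⟶ 𝟭 C` and a
natural transformation `σ : S ⟶ 𝟭 C`. -/
structure PreSummability (C : Type u) [Category.{v} C] [HasZeroMorphisms C] where
  S : C ⥤ C
  π0 : S ⟶ 𝟭 C
  π1 : S ⟶ 𝟭 C
  σ : S ⟶ 𝟭 C
  jointly_monic : ∀ {Y X : C} (f g : Y ⟶ S.obj X),
    f ≫ π0.app X = g ≫ π0.app X → f ≫ π1.app X = g ≫ π1.app X → f = g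

namespace PreSummability

variable {C : Type u} [Category.{v} C] [HasZeroMorphisms C] (P : PreSummability C)

/-- Two morphisms are summable when they admit a (necessarily unique) witness. -/
def Summable {Y X : C} (f₀ f₁ : Y ⟶ X) : Prop :=
  ∃ h : Y ⟶ P.S.obj X, h ≫ P.π0.app X = f₀ ∧ h ≫ P.π1.app X = f₁

/-- The witness `⟨f₀, f₁⟩` of a summable pair (an arbitrary value if the pair is
not summable). -/
noncomputable def witness {Y X : C} (f₀ f₁ : Y ⟶ X) : Y ⟶ P.S.obj X :=
  @dite _ (P.Summable f₀ f₁) (Classical.propDecidable _) (fun h => h.choose) (fun _ => 0)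

/-- The sum `f₀ + f₁ = σ ∘ ⟨f₀, f₁⟩` of a summable pair. -/
noncomputable def sum {Y X : C} (f₀ f₁ : Y ⟶ X) : Y ⟶ X :=
  P.witness f₀ f₁ ≫ P.σ.app X

/-- Projections indexed by a boolean. -/
def pr (i : Bool) : P.S ⟶ 𝟭 C := if i then P.π1 else P.π0

/-- Axiom (S-com): `π₁` and `π₀` are summable with `π₁ + π₀ = σ`. -/
def SCom : Prop := ∀ X : C,
  P.Summable (P.π1.app X) (P.π0.app X) ∧ P.sum (P.π1.app X) (P.π0.app X) = P.σ.app X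

/-- Axiom (S-zero): `0` and `id` are summable with `0 + id = id`. -/
def SZero : Prop := ∀ X : C,
  P.Summable (0 : X ⟶ X) (𝟙 X) ∧ P.sum (0 : X ⟶ X) (𝟙 X) = 𝟙 X

/-- Axiom (S-wit): if `σ∘f₀` and `σ∘f₁` are summable then `f₀` and `f₁` are summable. -/
def SWit : Prop := ∀ (X Y : C) (f₀ f₁ : X ⟶ P.S.obj Y),
  P.Summable (f₀ ≫ P.σ.app Y) (f₁ ≫ P.σ.app Y) → P.Summable f₀ f₁

end PreSummability

namespace PreSummability

variable {C : Type u} [Category.{v} C] [HasZeroMorphisms C]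

/-- The unit `ι₀ = ⟨id, 0⟩ : X ⟶ S X`. -/
noncomputable def iota0 (P : PreSummability C) (X : C) : X ⟶ P.S.obj X :=
  P.witness (𝟙 X) 0

end PreSummability

/-! Sums in a summable category form a partial commutative monoid with unit `0`: commutativity
comes from (S-com), the unit laws from (S-zero), and associativity from (S-wit), which assembles
`⟨a, b⟩` and `c ≫ ι₀` into a witness in `S²X` whose two ways of being summed give `(a + b) + c`
and `(c + a) + b`. As `π₀, π₁` are jointly monic, each monad law is checked componentwise; the only
nontrivial component, `π₁` of associativity, is `a + (b + c) = (a + b) + c` for the three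
first-order components `π₁π₀π₀, π₀π₁π₀, π₀π₀π₁` of `S³X`. -/

namespace PreSummability

variable {C : Type u} [Category.{v} C] [HasZeroMorphisms C] (P : PreSummability C)

@[simp]
lemma map_π0 {X Y : C} (f : X ⟶ Y) : P.S.map f ≫ P.π0.app Y = P.π0.app X ≫ f :=
  P.π0.naturality f

@[simp]
lemma map_π1 {X Y : C} (f : X ⟶ Y) : P.S.map f ≫ P.π1.app Y = P.π1.app X ≫ f :=
  P.π1.naturality f

@[simp]
lemma map_σ {X Y : C} (f : X ⟶ Y) : P.S.map f ≫ P.σ.app Y = P.σ.app X ≫ f :=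
  P.σ.naturality f

@[simp]
lemma map_π0_assoc {X Y Z : C} (f : X ⟶ Y) (g : Y ⟶ Z) :
    P.S.map f ≫ P.π0.app Y ≫ g = P.π0.app X ≫ f ≫ g := by
  rw [← Category.assoc, map_π0, Category.assoc]

@[simp]
lemma map_π1_assoc {X Y Z : C} (f : X ⟶ Y) (g : Y ⟶ Z) :
    P.S.map f ≫ P.π1.app Y ≫ g = P.π1.app X ≫ f ≫ g := by
  rw [← Category.assoc, map_π1, Category.assoc]

-- `map_π0` does not rewrite `P.S.map (α.app X)`, whose codomain is `(𝟭 C).obj X` rather than `X`.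
lemma map_app_π0 (α : P.S ⟶ 𝟭 C) (X : C) :
    P.S.map (α.app X) ≫ P.π0.app X = P.π0.app (P.S.obj X) ≫ α.app X :=
  P.π0.naturality (α.app X)

lemma map_app_π1 (α : P.S ⟶ 𝟭 C) (X : C) :
    P.S.map (α.app X) ≫ P.π1.app X = P.π1.app (P.S.obj X) ≫ α.app X :=
  P.π1.naturality (α.app X)

lemma map_app_σ (α : P.S ⟶ 𝟭 C) (X : C) :
    P.S.map (α.app X) ≫ P.σ.app X = P.σ.app (P.S.obj X) ≫ α.app X :=
  P.σ.naturality (α.app X)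

lemma hom_ext {Y X : C} {f g : Y ⟶ P.S.obj X} (h₀ : f ≫ P.π0.app X = g ≫ P.π0.app X)
    (h₁ : f ≫ P.π1.app X = g ≫ P.π1.app X) : f = g :=
  P.jointly_monic f g h₀ h₁

variable {P}

lemma witness_π0 {Y X : C} {f₀ f₁ : Y ⟶ X} (h : P.Summable f₀ f₁) :
    P.witness f₀ f₁ ≫ P.π0.app X = f₀ := by
  rw [witness, dif_pos h]
  exact h.choose_spec.1

lemma witness_π1 {Y X : C} {f₀ f₁ : Y ⟶ X} (h : P.Summable f₀ f₁) :
    P.witness f₀ f₁ ≫ P.π1.app X = f₁ := by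
  rw [witness, dif_pos h]
  exact h.choose_spec.2

lemma witness_eq {Y X : C} {f₀ f₁ : Y ⟶ X} {h : Y ⟶ P.S.obj X}
    (h₀ : h ≫ P.π0.app X = f₀) (h₁ : h ≫ P.π1.app X = f₁) : P.witness f₀ f₁ = h :=
  have hs : P.Summable f₀ f₁ := ⟨h, h₀, h₁⟩
  P.hom_ext (by rw [witness_π0 hs, h₀]) (by rw [witness_π1 hs, h₁])

lemma sum_eq {Y X : C} {f₀ f₁ : Y ⟶ X} {h : Y ⟶ P.S.obj X}
    (h₀ : h ≫ P.π0.app X = f₀) (h₁ : h ≫ P.π1.app X = f₁) : P.sum f₀ f₁ = h ≫ P.σ.app X := by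
  rw [sum, witness_eq h₀ h₁]

lemma Summable.precomp {Z Y X : C} {f₀ f₁ : Y ⟶ X} (h : P.Summable f₀ f₁) (e : Z ⟶ Y) :
    P.Summable (e ≫ f₀) (e ≫ f₁) :=
  ⟨e ≫ P.witness f₀ f₁, by rw [Category.assoc, witness_π0 h], by rw [Category.assoc, witness_π1 h]⟩

lemma comp_sum {Z Y X : C} {f₀ f₁ : Y ⟶ X} (h : P.Summable f₀ f₁) (e : Z ⟶ Y) :
    e ≫ P.sum f₀ f₁ = P.sum (e ≫ f₀) (e ≫ f₁) := by
  rw [sum_eq (h := e ≫ P.witness f₀ f₁) (by rw [Category.assoc, witness_π0 h])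
    (by rw [Category.assoc, witness_π1 h]), sum, Category.assoc]

lemma Summable.postcomp {Y X X' : C} {f₀ f₁ : Y ⟶ X} (h : P.Summable f₀ f₁) (k : X ⟶ X') :
    P.Summable (f₀ ≫ k) (f₁ ≫ k) :=
  ⟨P.witness f₀ f₁ ≫ P.S.map k, by rw [Category.assoc, map_π0, ← Category.assoc, witness_π0 h],
    by rw [Category.assoc, map_π1, ← Category.assoc, witness_π1 h]⟩

lemma sum_comp {Y X X' : C} {f₀ f₁ : Y ⟶ X} (h : P.Summable f₀ f₁) (k : X ⟶ X') :
    P.sum f₀ f₁ ≫ k = P.sum (f₀ ≫ k) (f₁ ≫ k) := by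
  rw [sum_eq (h := P.witness f₀ f₁ ≫ P.S.map k)
      (by rw [Category.assoc, map_π0, ← Category.assoc, witness_π0 h])
      (by rw [Category.assoc, map_π1, ← Category.assoc, witness_π1 h]),
    sum, Category.assoc, Category.assoc, map_σ]

lemma summable_π1_π0 (hcom : P.SCom) (X : C) : P.Summable (X := X) (P.π1.app X) (P.π0.app X) :=
  (hcom X).1

lemma sum_π1_π0 (hcom : P.SCom) (X : C) : P.sum (X := X) (P.π1.app X) (P.π0.app X) = P.σ.app X :=
  (hcom X).2

lemma Summable.symm (hcom : P.SCom) {Y X : C} {f₀ f₁ : Y ⟶ X} (h : P.Summable f₀ f₁) :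
    P.Summable f₁ f₀ := by
  simpa only [Category.assoc, witness_π0 (summable_π1_π0 hcom X),
    witness_π1 (summable_π1_π0 hcom X), witness_π0 h, witness_π1 h] using
    (summable_π1_π0 hcom X).precomp (P.witness f₀ f₁)

lemma sum_comm (hcom : P.SCom) {Y X : C} {f₀ f₁ : Y ⟶ X} (h : P.Summable f₀ f₁) :
    P.sum f₁ f₀ = P.sum f₀ f₁ :=
  calc P.sum f₁ f₀
      = P.sum (P.witness f₀ f₁ ≫ P.π1.app X) (P.witness f₀ f₁ ≫ P.π0.app X) := by
        rw [witness_π0 h, witness_π1 h]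
    _ = P.witness f₀ f₁ ≫ P.sum (P.π1.app X) (P.π0.app X) :=
        (comp_sum (summable_π1_π0 hcom X) _).symm
    _ = P.sum f₀ f₁ := by rw [sum_π1_π0 hcom X, sum]

lemma summable_zero_left (hzero : P.SZero) {Y X : C} (f : Y ⟶ X) : P.Summable 0 f := by
  simpa only [comp_zero, Category.comp_id] using (hzero X).1.precomp f

lemma zero_sum (hzero : P.SZero) {Y X : C} (f : Y ⟶ X) : P.sum 0 f = f := by
  simpa only [comp_zero, Category.comp_id, (hzero X).2] using (comp_sum (hzero X).1 f).symm

lemma summable_zero_right (hcom : P.SCom) (hzero : P.SZero) {Y X : C} (f : Y ⟶ X) :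
    P.Summable f 0 :=
  (summable_zero_left hzero f).symm hcom

lemma sum_zero (hcom : P.SCom) (hzero : P.SZero) {Y X : C} (f : Y ⟶ X) : P.sum f 0 = f := by
  rw [sum_comm hcom (summable_zero_left hzero f), zero_sum hzero]

lemma iota0_π0 (hcom : P.SCom) (hzero : P.SZero) (X : C) : iota0 P X ≫ P.π0.app X = 𝟙 X :=
  witness_π0 (summable_zero_right hcom hzero (𝟙 X))

lemma iota0_π1 (hcom : P.SCom) (hzero : P.SZero) (X : C) : iota0 P X ≫ P.π1.app X = 0 :=
  witness_π1 (summable_zero_right hcom hzero (𝟙 X))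

lemma iota0_σ (hcom : P.SCom) (hzero : P.SZero) (X : C) : iota0 P X ≫ P.σ.app X = 𝟙 X :=
  sum_zero hcom hzero (𝟙 X)

lemma summable_π1π0_π0π1 (hcom : P.SCom) (hwit : P.SWit) (X : C) :
    P.Summable (P.π1.app (P.S.obj X) ≫ P.π0.app X) (P.π0.app (P.S.obj X) ≫ P.π1.app X) := by
  -- (S-wit) applies to `π₁` and `π₀ ≫ ⟨π₁, π₀⟩`: composed with `σ` they become `π₁ ≫ σ` and
  -- `π₀ ≫ σ`, which `S σ` witnesses (in the other order).
  have hσ : P.Summable (P.π1.app (P.S.obj X) ≫ P.σ.app X)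
      ((P.π0.app (P.S.obj X) ≫ P.witness (P.π1.app X) (P.π0.app X)) ≫ P.σ.app X) := by
    have swap_σ : P.witness (P.π1.app X) (P.π0.app X) ≫ P.σ.app X = P.σ.app X :=
      sum_π1_π0 hcom X
    rw [Category.assoc, swap_σ]
    exact Summable.symm hcom ⟨P.S.map (P.σ.app X), P.map_app_π0 _ X, P.map_app_π1 _ X⟩
  simpa only [Category.assoc, witness_π0 (summable_π1_π0 hcom X)] using
    (hwit _ _ _ _ hσ).postcomp (P.π0.app X)

lemma sum_sum_exchange (hcom : P.SCom) (hzero : P.SZero) (hwit : P.SWit) {Z X : C}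
    {a b c : Z ⟶ X} (hab : P.Summable a b) (habc : P.Summable (P.sum a b) c) :
    P.sum (P.sum a b) c = P.sum (P.sum c a) b := by
  obtain ⟨h, h₀, h₁⟩ := hwit _ _ (P.witness a b) (c ≫ iota0 P X)
    (by rwa [Category.assoc, iota0_σ hcom hzero, Category.comp_id])
  have hrows : P.Summable (c ≫ iota0 P X) (P.witness a b) := by
    simpa only [h₀, h₁] using (summable_π1_π0 hcom (P.S.obj X)).precomp h
  have hσ : h ≫ P.σ.app (P.S.obj X) = P.sum (c ≫ iota0 P X) (P.witness a b) := by
    rw [← sum_π1_π0 hcom (P.S.obj X), comp_sum (summable_π1_π0 hcom (P.S.obj X)), h₀, h₁]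
  calc P.sum (P.sum a b) c = (h ≫ P.S.map (P.σ.app X)) ≫ P.σ.app X := by
        refine sum_eq ?_ ?_
        · rw [Category.assoc, map_app_π0, ← Category.assoc, h₀]
          rfl
        · rw [Category.assoc, map_app_π1, ← Category.assoc, h₁, Category.assoc,
            iota0_σ hcom hzero, Category.comp_id]
    _ = (h ≫ P.σ.app (P.S.obj X)) ≫ P.σ.app X := by
        rw [Category.assoc, map_app_σ, Category.assoc]
    _ = P.sum (P.sum c a) b := by
        refine (sum_eq ?_ ?_).symm
        · rw [hσ, sum_comp hrows, Category.assoc, iota0_π0 hcom hzero, Category.comp_id,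
            witness_π0 hab]
        · rw [hσ, sum_comp hrows, Category.assoc, iota0_π1 hcom hzero, comp_zero,
            witness_π1 hab, zero_sum hzero]

lemma sum_assoc (hcom : P.SCom) (hzero : P.SZero) (hwit : P.SWit) {Z X : C}
    {a b c : Z ⟶ X} (hbc : P.Summable b c) (habc : P.Summable a (P.sum b c)) :
    P.sum a (P.sum b c) = P.sum (P.sum a b) c := by
  rw [← sum_comm hcom habc, sum_sum_exchange hcom hzero hwit hbc (habc.symm hcom)]

section Monad

variable (hcom : P.SCom) (hzero : P.SZero) (hwit : P.SWit)
  (τ : ∀ X : C, P.S.obj (P.S.obj X) ⟶ P.S.obj X)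
  (hτ0 : ∀ X : C, τ X ≫ P.π0.app X = P.π0.app (P.S.obj X) ≫ P.π0.app X)
  (hτ1 : ∀ X : C, τ X ≫ P.π1.app X =
    P.sum (P.π1.app (P.S.obj X) ≫ P.π0.app X) (P.π0.app (P.S.obj X) ≫ P.π1.app X))

include hcom hzero in
lemma iota0_naturality {X Y : C} (f : X ⟶ Y) : f ≫ iota0 P Y = iota0 P X ≫ P.S.map f := by
  refine P.hom_ext ?_ ?_
  · rw [Category.assoc, iota0_π0 hcom hzero, Category.assoc, map_π0, ← Category.assoc,
      iota0_π0 hcom hzero, Category.comp_id, Category.id_comp]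
  · rw [Category.assoc, iota0_π1 hcom hzero, Category.assoc, map_π1, ← Category.assoc,
      iota0_π1 hcom hzero, comp_zero, zero_comp]

include hcom hwit hτ1 in
lemma comp_τ_π1 {Z X : C} (g : Z ⟶ P.S.obj (P.S.obj X)) :
    g ≫ τ X ≫ P.π1.app X =
      P.sum (g ≫ P.π1.app (P.S.obj X) ≫ P.π0.app X)
        (g ≫ P.π0.app (P.S.obj X) ≫ P.π1.app X) := by
  rw [hτ1, comp_sum (summable_π1π0_π0π1 hcom hwit X)]

include hcom hwit hτ0 hτ1 in
lemma τ_naturality {X Y : C} (f : X ⟶ Y) : P.S.map (P.S.map f) ≫ τ Y = τ X ≫ P.S.map f := by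
  refine P.hom_ext ?_ ?_
  · simp only [Category.assoc, hτ0, map_π0_assoc, map_π0]
    rw [← Category.assoc (τ X), hτ0, Category.assoc]
  · simp only [Category.assoc, map_π1]
    rw [comp_τ_π1 hcom hwit τ hτ1, ← Category.assoc (τ X), hτ1,
      sum_comp (summable_π1π0_π0π1 hcom hwit X)]
    simp only [Category.assoc, map_π0_assoc, map_π1_assoc, map_π0, map_π1]

include hcom hzero hwit hτ0 hτ1 in
lemma iota0_τ (X : C) : iota0 P (P.S.obj X) ≫ τ X = 𝟙 (P.S.obj X) := by
  refine P.hom_ext ?_ ?_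
  · rw [Category.assoc, hτ0, ← Category.assoc, iota0_π0 hcom hzero,
      Category.id_comp]
  · rw [Category.assoc, comp_τ_π1 hcom hwit τ hτ1, ← Category.assoc, iota0_π1 hcom hzero,
      zero_comp, ← Category.assoc, iota0_π0 hcom hzero, Category.id_comp, zero_sum hzero]

include hcom hzero hwit hτ0 hτ1 in
lemma map_iota0_τ (X : C) : P.S.map (iota0 P X) ≫ τ X = 𝟙 (P.S.obj X) := by
  refine P.hom_ext ?_ ?_
  · rw [Category.assoc, hτ0, map_π0_assoc]
    dsimp only [Functor.id_obj]
    rw [iota0_π0 hcom hzero, Category.comp_id, Category.id_comp]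
  · rw [Category.assoc, comp_τ_π1 hcom hwit τ hτ1, map_π0_assoc, map_π1_assoc]
    dsimp only [Functor.id_obj]
    rw [iota0_π0 hcom hzero, iota0_π1 hcom hzero, Category.comp_id, comp_zero,
      sum_zero hcom hzero, Category.id_comp]

include hcom hzero hwit hτ0 hτ1 in
lemma map_τ_τ (X : C) : P.S.map (τ X) ≫ τ X = τ (P.S.obj X) ≫ τ X := by
  have hpair := summable_π1π0_π0π1 hcom hwit
  refine P.hom_ext ?_ ?_
  · simp only [Category.assoc, hτ0, map_π0_assoc]
    rw [← Category.assoc (τ _), hτ0, Category.assoc]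
  set X₃ := P.S.obj (P.S.obj (P.S.obj X))
  set a : X₃ ⟶ X := P.π1.app _ ≫ P.π0.app (P.S.obj X) ≫ P.π0.app X
  set b : X₃ ⟶ X := P.π0.app _ ≫ P.π1.app (P.S.obj X) ≫ P.π0.app X
  set c : X₃ ⟶ X := P.π0.app _ ≫ P.π0.app (P.S.obj X) ≫ P.π1.app X
  have hbc : P.Summable b c := (hpair X).precomp _
  have hSτ₁ : P.S.map (τ X) ≫ P.π1.app (P.S.obj X) ≫ P.π0.app X = a := by
    rw [map_π1_assoc, hτ0]
  have hSτ₀ : P.S.map (τ X) ≫ P.π0.app (P.S.obj X) ≫ P.π1.app X = P.sum b c := by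
    rw [map_π0_assoc, comp_τ_π1 hcom hwit τ hτ1]
  have habc : P.Summable a (P.sum b c) := hSτ₁ ▸ hSτ₀ ▸ (hpair X).precomp (P.S.map (τ X))
  have hτS₁ : τ (P.S.obj X) ≫ P.π1.app (P.S.obj X) ≫ P.π0.app X = P.sum a b := by
    rw [← Category.assoc, hτ1, sum_comp (hpair _)]
    simp only [Category.assoc]
    rfl
  have hτS₀ : τ (P.S.obj X) ≫ P.π0.app (P.S.obj X) ≫ P.π1.app X = c := by
    rw [← Category.assoc, hτ0, Category.assoc]
  calc (P.S.map (τ X) ≫ τ X) ≫ P.π1.app X = P.sum a (P.sum b c) := by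
        rw [Category.assoc, comp_τ_π1 hcom hwit τ hτ1, hSτ₁, hSτ₀]
    _ = P.sum (P.sum a b) c := sum_assoc hcom hzero hwit hbc habc
    _ = (τ (P.S.obj X) ≫ τ X) ≫ P.π1.app X := by
        rw [Category.assoc, comp_τ_π1 hcom hwit τ hτ1, hτS₁, hτS₀]

end Monad

end PreSummability

open PreSummability

theorem stmt13 {C : Type u} [Category.{v} C] [HasZeroMorphisms C]
    (P : PreSummability C) (hcom : P.SCom) (hzero : P.SZero) (hwit : P.SWit)
    (τ : ∀ X : C, P.S.obj (P.S.obj X) ⟶ P.S.obj X)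
    (hτ0 : ∀ X : C, τ X ≫ P.π0.app X = P.π0.app (P.S.obj X) ≫ P.π0.app X)
    (hτ1 : ∀ X : C, τ X ≫ P.π1.app X =
      P.sum (P.π1.app (P.S.obj X) ≫ P.π0.app X) (P.π0.app (P.S.obj X) ≫ P.π1.app X)) :
    -- `ι₀` is natural
    (∀ {X Y : C} (f : X ⟶ Y), f ≫ iota0 P Y = iota0 P X ≫ P.S.map f) ∧
    -- `τ` is natural
    (∀ {X Y : C} (f : X ⟶ Y), P.S.map (P.S.map f) ≫ τ Y = τ X ≫ P.S.map f) ∧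
    -- unit laws
    (∀ X : C, iota0 P (P.S.obj X) ≫ τ X = 𝟙 (P.S.obj X)) ∧
    (∀ X : C, P.S.map (iota0 P X) ≫ τ X = 𝟙 (P.S.obj X)) ∧
    -- associativity
    (∀ X : C, P.S.map (τ X) ≫ τ X = τ (P.S.obj X) ≫ τ X) :=
  ⟨iota0_naturality hcom hzero, τ_naturality hcom hwit τ hτ0 hτ1,
    iota0_τ hcom hzero hwit τ hτ0 hτ1, map_iota0_τ hcom hzero hwit τ hτ0 hτ1,
    map_τ_τ hcom hzero hwit τ hτ0 hτ1⟩
end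

section
/- Let 𝓛 be a summable symmetric monoidal closed category satisfying (S-⊸). If f₀, f₁ ∈ 𝓛(Z⊗X, Y) are summable, then their curryings cur(f₀), cur(f₁) ∈ 𝓛(Z, X⊸Y) are summable and cur(f₀ + f₁) = cur(f₀) + cur(f₁). -/
/-!
Curry the witness `⟨f₀, f₁⟩ : Z ⊗ X ⟶ S Y` and pull it back along the inverse of the
(S-⊸) isomorphism `S(X ⊸ Y) ≅ (X ⊸ S Y)`. Since the strength commutes with `π₀`, `π₁` and `σ`
(by (S-⊗) applied to `π₀ + π₁ = σ`), that isomorphism turns postcomposition with `π₀`, `π₁`, `σ`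
on `X ⊸ Y` into `X ⊸ π₀`, `X ⊸ π₁`, `X ⊸ σ`. Hence the pulled-back map is a witness for
`cur f₀, cur f₁`, and its composite with `σ` is `cur (f₀ + f₁)`.
-/

open CategoryTheory Limits MonoidalCategory

universe v u

section Monoidal

variable {C : Type u} [Category.{v} C] [HasZeroMorphisms C] [MonoidalCategory C]

/-- The tensor product of zero morphisms is zero. -/
def TensorZero (C : Type u) [Category.{v} C] [HasZeroMorphisms C]
    [MonoidalCategory C] : Prop :=
  ∀ {X Y U V : C} (f : U ⟶ V),
    ((0 : X ⟶ Y) ⊗ₘ f) = 0 ∧ (f ⊗ₘ (0 : X ⟶ Y)) = 0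

/-- Axiom (S-⊗): if `f₀` and `f₁` are summable then so are `f₀ ⊗ g` and `f₁ ⊗ g`,
with `(f₀ + f₁) ⊗ g = f₀ ⊗ g + f₁ ⊗ g`. -/
def PreSummability.STens (P : PreSummability C) : Prop :=
  ∀ {X Y U V : C} (f₀ f₁ : X ⟶ Y) (g : U ⟶ V), P.Summable f₀ f₁ →
    P.Summable (f₀ ⊗ₘ g) (f₁ ⊗ₘ g) ∧ (P.sum f₀ f₁ ⊗ₘ g) = P.sum (f₀ ⊗ₘ g) (f₁ ⊗ₘ g)

end Monoidal

namespace PreSummability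

variable {C : Type u} [Category.{v} C] [HasZeroMorphisms C] [MonoidalCategory C]

/-- The canonical strength `φ¹ = ⟨π₀ ⊗ id, π₁ ⊗ id⟩ : S X ⊗ Y ⟶ S (X ⊗ Y)`. -/
noncomputable def strength (P : PreSummability C) (X Y : C) :
    P.S.obj X ⊗ Y ⟶ P.S.obj (X ⊗ Y) :=
  P.witness (P.π0.app X ⊗ₘ 𝟙 Y) (P.π1.app X ⊗ₘ 𝟙 Y)

variable [SymmetricCategory C] [MonoidalClosed C]

/-- Currying on the right tensor factor: from `Z ⊗ X ⟶ Y` to `Z ⟶ (X ⊸ Y)`. -/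
noncomputable def curR {Z X Y : C} (f : Z ⊗ X ⟶ Y) : Z ⟶ (ihom X).obj Y :=
  MonoidalClosed.curry ((β_ X Z).hom ≫ f)

/-- The canonical morphism `S(X ⊸ Y) ⟶ (X ⊸ S Y)`, obtained by currying
`S(ev) ∘ φ¹`. -/
noncomputable def sint (P : PreSummability C) (A B : C) :
    P.S.obj ((ihom A).obj B) ⟶ (ihom A).obj (P.S.obj B) :=
  MonoidalClosed.curry
    ((β_ A (P.S.obj ((ihom A).obj B))).hom ≫ strength P ((ihom A).obj B) A ≫
      P.S.map ((β_ ((ihom A).obj B) A).hom ≫ MonoidalClosed.uncurry (𝟙 ((ihom A).obj B))))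

/-- Axiom (S-⊸): the canonical morphism `S(X ⊸ Y) ⟶ (X ⊸ S Y)` is an iso. -/
def SLimpl (P : PreSummability C) : Prop := ∀ A B : C, IsIso (P.sint A B)

end PreSummability

open PreSummability

namespace PreSummability

section Witness

variable {C : Type u} [Category.{v} C] [HasZeroMorphisms C] (P : PreSummability C)

theorem witness_spec {Y X : C} {f₀ f₁ : Y ⟶ X} (h : P.Summable f₀ f₁) :
    P.witness f₀ f₁ ≫ P.π0.app X = f₀ ∧ P.witness f₀ f₁ ≫ P.π1.app X = f₁ := by
  rw [witness, dif_pos h]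
  exact h.choose_spec

theorem witness_eq_of_comp {Y X : C} {f₀ f₁ : Y ⟶ X} (w : Y ⟶ P.S.obj X)
    (h₀ : w ≫ P.π0.app X = f₀) (h₁ : w ≫ P.π1.app X = f₁) :
    P.witness f₀ f₁ = w := by
  obtain ⟨s₀, s₁⟩ := P.witness_spec ⟨w, h₀, h₁⟩
  exact P.jointly_monic _ _ (s₀.trans h₀.symm) (s₁.trans h₁.symm)

theorem sum_eq_of_comp {Y X : C} {f₀ f₁ : Y ⟶ X} (w : Y ⟶ P.S.obj X)
    (h₀ : w ≫ P.π0.app X = f₀) (h₁ : w ≫ P.π1.app X = f₁) :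
    P.sum f₀ f₁ = w ≫ P.σ.app X := by
  rw [sum, P.witness_eq_of_comp w h₀ h₁]

theorem summable_π (X : C) : P.Summable (P.π0.app X) (P.π1.app X) :=
  ⟨𝟙 _, Category.id_comp _, Category.id_comp _⟩

theorem sum_π (X : C) : P.sum (P.π0.app X) (P.π1.app X) = P.σ.app X := by
  rw [P.sum_eq_of_comp (𝟙 (P.S.obj X)) (Category.id_comp _) (Category.id_comp _),
    Category.id_comp]

end Witness

section Strength

variable {C : Type u} [Category.{v} C] [HasZeroMorphisms C] [MonoidalCategory C]
  (P : PreSummability C)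

theorem strength_comp_π0 (htens : P.STens) (X Y : C) :
    P.strength X Y ≫ P.π0.app (X ⊗ Y) = P.π0.app X ⊗ₘ 𝟙 Y :=
  (P.witness_spec (htens _ _ _ (P.summable_π X)).1).1

theorem strength_comp_π1 (htens : P.STens) (X Y : C) :
    P.strength X Y ≫ P.π1.app (X ⊗ Y) = P.π1.app X ⊗ₘ 𝟙 Y :=
  (P.witness_spec (htens _ _ _ (P.summable_π X)).1).2

theorem strength_comp_σ (htens : P.STens) (X Y : C) :
    P.strength X Y ≫ P.σ.app (X ⊗ Y) = P.σ.app X ⊗ₘ 𝟙 Y := by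
  have h := (htens _ _ (𝟙 Y) (P.summable_π X)).2
  rw [sum_π] at h
  rw [h]
  rfl

end Strength

theorem curR_comp {C : Type u} [Category.{v} C] [MonoidalCategory C] [SymmetricCategory C]
    [MonoidalClosed C] {Z X Y Y' : C} (f : Z ⊗ X ⟶ Y) (g : Y ⟶ Y') :
    curR (f ≫ g) = curR f ≫ (ihom X).map g := by
  rw [curR, curR, ← MonoidalClosed.curry_natural_right, Category.assoc]

section Closed

variable {C : Type u} [Category.{v} C] [HasZeroMorphisms C] [MonoidalCategory C]
  [SymmetricCategory C] [MonoidalClosed C] (P : PreSummability C)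

theorem sint_comp_map_app (τ : P.S ⟶ 𝟭 C) (A B : C)
    (hτ : P.strength ((ihom A).obj B) A ≫ τ.app ((ihom A).obj B ⊗ A)
      = τ.app ((ihom A).obj B) ⊗ₘ 𝟙 A) :
    P.sint A B ≫ (ihom A).map (τ.app B) = τ.app ((ihom A).obj B) := by
  have huncurried : (β_ A (P.S.obj ((ihom A).obj B))).hom ≫ P.strength ((ihom A).obj B) A ≫
      P.S.map ((β_ ((ihom A).obj B) A).hom ≫ MonoidalClosed.uncurry (𝟙 ((ihom A).obj B))) ≫
      τ.app B = MonoidalClosed.uncurry (τ.app ((ihom A).obj B)) := by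
    rw [τ.naturality, Functor.id_map, reassoc_of% hτ,
      reassoc_of% (BraidedCategory.braiding_naturality (𝟙 A) (τ.app ((ihom A).obj B))).symm,
      SymmetricCategory.symmetry_assoc, MonoidalCategory.id_tensorHom,
      ← MonoidalClosed.uncurry_natural_left, Category.comp_id]
  rw [sint, ← MonoidalClosed.curry_natural_right, Category.assoc, Category.assoc,
    huncurried, MonoidalClosed.curry_uncurry]

theorem curR_comp_inv_sint_comp_app (τ : P.S ⟶ 𝟭 C) {Z A B : C} [IsIso (P.sint A B)]
    (hτ : P.strength ((ihom A).obj B) A ≫ τ.app ((ihom A).obj B ⊗ A)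
      = τ.app ((ihom A).obj B) ⊗ₘ 𝟙 A)
    (w : Z ⊗ A ⟶ P.S.obj B) :
    curR w ≫ inv (P.sint A B) ≫ τ.app ((ihom A).obj B) = curR (w ≫ τ.app B) := by
  rw [curR_comp, ← P.sint_comp_map_app τ A B hτ, IsIso.inv_hom_id_assoc]

end Closed

end PreSummability

theorem stmt18_general {C : Type u} [Category.{v} C] [HasZeroMorphisms C]
    [MonoidalCategory C] [SymmetricCategory C] [MonoidalClosed C]
    (P : PreSummability C) (htens : P.STens) (hlimpl : P.SLimpl)
    {Z X Y : C} (f₀ f₁ : Z ⊗ X ⟶ Y) (hs : P.Summable f₀ f₁) :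
    P.Summable (curR (C := C) f₀) (curR (C := C) f₁) ∧
    curR (C := C) (P.sum f₀ f₁) = P.sum (curR (C := C) f₀) (curR (C := C) f₁) := by
  have := hlimpl X Y
  obtain ⟨h₀, h₁⟩ := P.witness_spec hs
  let w := curR (P.witness f₀ f₁) ≫ inv (P.sint X Y)
  have w₀ : w ≫ P.π0.app _ = curR f₀ := by
    rw [Category.assoc, P.curR_comp_inv_sint_comp_app _ (P.strength_comp_π0 htens _ _), h₀]
  have w₁ : w ≫ P.π1.app _ = curR f₁ := by
    rw [Category.assoc, P.curR_comp_inv_sint_comp_app _ (P.strength_comp_π1 htens _ _), h₁]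
  refine ⟨⟨w, w₀, w₁⟩, ?_⟩
  rw [P.sum_eq_of_comp w w₀ w₁, Category.assoc,
    P.curR_comp_inv_sint_comp_app _ (P.strength_comp_σ htens _ _)]
  rfl

theorem stmt18 {C : Type u} [Category.{v} C] [HasZeroMorphisms C]
    [MonoidalCategory C] [SymmetricCategory C] [MonoidalClosed C]
    (htz : TensorZero C)
    (P : PreSummability C) (hcom : P.SCom) (hzero : P.SZero) (hwit : P.SWit)
    (htens : P.STens) (hlimpl : P.SLimpl)
    {Z X Y : C} (f₀ f₁ : Z ⊗ X ⟶ Y) (hs : P.Summable f₀ f₁) :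
    P.Summable (curR (C := C) f₀) (curR (C := C) f₁) ∧
    curR (C := C) (P.sum f₀ f₁) = P.sum (curR (C := C) f₀) (curR (C := C) f₁) :=
  stmt18_general P htens hlimpl f₀ f₁ hs
end
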